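/- arXiv:2311.06487 — 2 statements merged into one kernel-verified Lean document; each statement's English description precedes it below -/
import Mathlib

section
/- Given a finite directed graph G and integers k ≥ 0 and l > 0, every (k,l)-ĉore of G (i.e., every weakly connected component of the (k,l)-core of G) is contained in exactly one (k,l−1)-ĉore of G (i.e., in exactly one weakly connected component of the (k,l−1)-core). -/
open scoped Classical

/-- A finite directed graph: a finite vertex set together with a finite set of edges,
each edge being an ordered pair of distinct vertices (at most one edge per ordered pair). -/
structure DirGraph (V : Type*) where
  verts : Finset V
  edges : Finset (V × V)
  edge_fst : ∀ e ∈ edges, e.1 ∈ verts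
  edge_snd : ∀ e ∈ edges, e.2 ∈ verts
  ne : ∀ e ∈ edges, e.1 ≠ e.2

namespace DirGraph

variable {V : Type*}

/-- `H` is a subgraph of `G`. -/
def IsSubgraph (H G : DirGraph V) : Prop :=
  H.verts ⊆ G.verts ∧ H.edges ⊆ G.edges

/-- The in-degree of `v` within `G`: the number of edges of `G` ending at `v`. -/
noncomputable def inDeg (G : DirGraph V) (v : V) : ℕ :=
  (G.edges.filter fun e => e.2 = v).card

/-- The out-degree of `v` within `G`: the number of edges of `G` starting at `v`. -/
noncomputable def outDeg (G : DirGraph V) (v : V) : ℕ :=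
  (G.edges.filter fun e => e.1 = v).card

/-- Every vertex of `G` has in-degree at least `k` and out-degree at least `l` within `G`. -/
def DegOK (G : DirGraph V) (k l : ℕ) : Prop :=
  ∀ v ∈ G.verts, k ≤ G.inDeg v ∧ l ≤ G.outDeg v

/-- `C` is the (k,l)-core of `G`: the largest subgraph of `G` in which every vertex has
in-degree at least `k` and out-degree at least `l`. -/
def IsKLCore (G : DirGraph V) (k l : ℕ) (C : DirGraph V) : Prop :=
  C.IsSubgraph G ∧ C.DegOK k l ∧
    ∀ H : DirGraph V, H.IsSubgraph G → H.DegOK k l → H.IsSubgraph C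

/-- Adjacency in the underlying undirected graph (edge directions ignored). -/
def Adj (G : DirGraph V) (u v : V) : Prop := (u, v) ∈ G.edges ∨ (v, u) ∈ G.edges

/-- Reachability in the underlying undirected graph (edge directions ignored). -/
def Reach (G : DirGraph V) : V → V → Prop := Relation.ReflTransGen G.Adj

/-- The weakly connected component of `q` in `G`. -/
noncomputable def component (G : DirGraph V) (q : V) : DirGraph V where
  verts := G.verts.filter fun v => G.Reach q v
  edges := G.edges.filter fun e => G.Reach q e.1
  edge_fst := by
    intro e he
    rw [Finset.mem_filter] at he ⊢
    exact ⟨G.edge_fst e he.1, he.2⟩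
  edge_snd := by
    intro e he
    rw [Finset.mem_filter] at he ⊢
    exact ⟨G.edge_snd e he.1, he.2.tail (Or.inl he.1)⟩
  ne := fun e he => G.ne e (Finset.mem_filter.mp he).1

/-- `C` is a weakly connected component of `G`. -/
def IsComponent (G C : DirGraph V) : Prop := ∃ q ∈ G.verts, C = G.component q

/-- `G` is weakly connected: any two vertices are joined by a path in the underlying
undirected graph. -/
def WeaklyConnected (G : DirGraph V) : Prop :=
  ∀ u ∈ G.verts, ∀ v ∈ G.verts, G.Reach u v

/-- Reachability along directed paths. -/
def DiReach (G : DirGraph V) : V → V → Prop :=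
  Relation.ReflTransGen fun u v => (u, v) ∈ G.edges

/-- `G` is strongly connected: every vertex is reachable from every other vertex
by a directed path. -/
def StronglyConnected (G : DirGraph V) : Prop :=
  ∀ u ∈ G.verts, ∀ v ∈ G.verts, G.DiReach u v

/-- The union of two graphs: union of vertex sets, union of edge sets. -/
noncomputable def union [DecidableEq V] (G₁ G₂ : DirGraph V) : DirGraph V where
  verts := G₁.verts ∪ G₂.verts
  edges := G₁.edges ∪ G₂.edges
  edge_fst := by
    intro e he
    rcases Finset.mem_union.mp he with h | h
    · exact Finset.mem_union_left _ (G₁.edge_fst e h)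
    · exact Finset.mem_union_right _ (G₂.edge_fst e h)
  edge_snd := by
    intro e he
    rcases Finset.mem_union.mp he with h | h
    · exact Finset.mem_union_left _ (G₁.edge_snd e h)
    · exact Finset.mem_union_right _ (G₂.edge_snd e h)
  ne := by
    intro e he
    rcases Finset.mem_union.mp he with h | h
    · exact G₁.ne e h
    · exact G₂.ne e h

/-- The subgraph of `G` induced by a vertex set `S`: vertex set `S` and all edges of `G`
with both endpoints in `S`. -/
noncomputable def induce (G : DirGraph V) (S : Finset V) : DirGraph V where
  verts := S
  edges := G.edges.filter fun e => e.1 ∈ S ∧ e.2 ∈ S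
  edge_fst := fun e he => ((Finset.mem_filter.mp he).2).1
  edge_snd := fun e he => ((Finset.mem_filter.mp he).2).2
  ne := fun e he => G.ne e (Finset.mem_filter.mp he).1

/-- Delete a vertex and all edges incident to it. -/
noncomputable def deleteVert [DecidableEq V] (G : DirGraph V) (v : V) : DirGraph V where
  verts := G.verts.erase v
  edges := G.edges.filter fun e => e.1 ≠ v ∧ e.2 ≠ v
  edge_fst := by
    intro e he
    rw [Finset.mem_filter] at he
    exact Finset.mem_erase.mpr ⟨he.2.1, G.edge_fst e he.1⟩
  edge_snd := by
    intro e he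
    rw [Finset.mem_filter] at he
    exact Finset.mem_erase.mpr ⟨he.2.2, G.edge_snd e he.1⟩
  ne := fun e he => G.ne e (Finset.mem_filter.mp he).1

/-- The reverse graph: same vertices, every edge reversed. -/
noncomputable def reverse [DecidableEq V] (G : DirGraph V) : DirGraph V where
  verts := G.verts
  edges := G.edges.image fun e => (e.2, e.1)
  edge_fst := by
    intro e he
    obtain ⟨a, ha, rfl⟩ := Finset.mem_image.mp he
    exact G.edge_snd a ha
  edge_snd := by
    intro e he
    obtain ⟨a, ha, rfl⟩ := Finset.mem_image.mp he
    exact G.edge_fst a ha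
  ne := by
    intro e he
    obtain ⟨a, ha, rfl⟩ := Finset.mem_image.mp he
    exact (G.ne a ha).symm

end DirGraph

/-! Weakening the out-degree requirement from `l` to `l - 1` can only enlarge the core, so the
(k,l)-core is a subgraph of the (k,l-1)-core. A weakly connected component of a subgraph `H ⊆ G`
lies in the component of `G` through any of its vertices, and any component of `G` meeting it
contains that vertex, hence is that same component. -/

namespace DirGraph

variable {V : Type*}

protected lemma ext {G H : DirGraph V} (hv : G.verts = H.verts) (he : G.edges = H.edges) :
    G = H := by
  cases G; cases H; simp_all

lemma Reach.symm {G : DirGraph V} {u v : V} (h : G.Reach u v) : G.Reach v u :=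
  haveI : Std.Symm G.Adj := ⟨fun _ _ hab => Or.symm hab⟩
  Std.Symm.symm (r := Relation.ReflTransGen G.Adj) _ _ h

lemma Reach.mono {G H : DirGraph V} (hE : G.edges ⊆ H.edges) {u v : V} (h : G.Reach u v) :
    H.Reach u v :=
  Relation.ReflTransGen.mono (fun _ _ hab => Or.imp (@hE _) (@hE _) hab) u v h

lemma mem_component_verts {G : DirGraph V} {q v : V} :
    v ∈ (G.component q).verts ↔ v ∈ G.verts ∧ G.Reach q v :=
  Finset.mem_filter

lemma component_eq_of_reach {G : DirGraph V} {p q : V} (h : G.Reach p q) :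
    G.component p = G.component q := by
  have hiff : ∀ v, G.Reach p v ↔ G.Reach q v :=
    fun v => ⟨h.symm.trans, h.trans⟩
  exact DirGraph.ext (Finset.filter_congr fun v _ => hiff v)
    (Finset.filter_congr fun e _ => hiff e.1)

lemma IsSubgraph.component {H G : DirGraph V} (hHG : H.IsSubgraph G) (q : V) :
    (H.component q).IsSubgraph (G.component q) :=
  ⟨fun _ hv => Finset.mem_filter.mpr
      ⟨hHG.1 (Finset.mem_filter.mp hv).1, (Finset.mem_filter.mp hv).2.mono hHG.2⟩,
    fun _ he => Finset.mem_filter.mpr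
      ⟨hHG.2 (Finset.mem_filter.mp he).1, (Finset.mem_filter.mp he).2.mono hHG.2⟩⟩

lemma IsSubgraph.existsUnique_component {H G D : DirGraph V} (hHG : H.IsSubgraph G)
    (hD : H.IsComponent D) : ∃! D' : DirGraph V, G.IsComponent D' ∧ D.IsSubgraph D' := by
  obtain ⟨q, hq, rfl⟩ := hD
  refine ⟨G.component q, ⟨⟨q, hHG.1 hq, rfl⟩, hHG.component q⟩, ?_⟩
  rintro _ ⟨⟨p, -, rfl⟩, hsub⟩
  have hqD : q ∈ (H.component q).verts := mem_component_verts.mpr ⟨hq, .refl⟩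
  exact component_eq_of_reach (mem_component_verts.mp (hsub.1 hqD)).2

lemma IsKLCore.isSubgraph_of_le {G C C' : DirGraph V} {k l k' l' : ℕ}
    (hC : G.IsKLCore k l C) (hC' : G.IsKLCore k' l' C') (hk : k' ≤ k) (hl : l' ≤ l) :
    C.IsSubgraph C' :=
  hC'.2.2 C hC.1 fun v hv => ⟨hk.trans (hC.2.1 v hv).1, hl.trans (hC.2.1 v hv).2⟩

end DirGraph

open DirGraph in
theorem klCore_component_nested_general {V : Type*} (G : DirGraph V) (k l : ℕ)
    (C C' D : DirGraph V) (hC : G.IsKLCore k l C) (hC' : G.IsKLCore k (l - 1) C')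
    (hD : C.IsComponent D) :
    ∃! D' : DirGraph V, C'.IsComponent D' ∧ D.IsSubgraph D' :=
  (hC.isSubgraph_of_le hC' le_rfl (Nat.sub_le l 1)).existsUnique_component hD

open DirGraph in
/-- for `l > 0`, every weakly connected component of the (k,l)-core
is contained in exactly one weakly connected component of the (k,l-1)-core. -/
theorem klCore_component_nested {V : Type*} (G : DirGraph V) (k l : ℕ) (hl : 0 < l)
    (C C' D : DirGraph V) (hC : G.IsKLCore k l C) (hC' : G.IsKLCore k (l - 1) C')
    (hD : C.IsComponent D) :
    ∃! D' : DirGraph V, C'.IsComponent D' ∧ D.IsSubgraph D' :=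
  klCore_component_nested_general G k l C C' D hC hC' hD
end

section
/- Let G be a finite directed graph, q a vertex of G, and k, l positive integers such that q belongs to the (k,l)-core of G. Then the weakly connected component of the (k,l)-core containing q is the unique maximum (with respect to the subgraph order) among all weakly connected subgraphs of G that contain q and in which every vertex has in-degree at least k and out-degree at least l; every such subgraph is contained in it. (This establishes the correctness of answering a CSD query by returning the (k,l)-ĉore containing q.) -/
open scoped Classical

namespace DirGraph

variable {V : Type*}

lemma reach_mono {H C : DirGraph V} (h : H.edges ⊆ C.edges) {u v : V}
    (hr : H.Reach u v) : C.Reach u v := by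
  induction hr with
  | refl => exact Relation.ReflTransGen.refl
  | tail _ hadj ih =>
      exact ih.tail (hadj.imp (fun he => h he) (fun he => h he))

lemma adj_symm (C : DirGraph V) {u v : V} (h : C.Adj u v) : C.Adj v u := h.symm

lemma reach_symm (C : DirGraph V) {u v : V} (h : C.Reach u v) : C.Reach v u := by
  induction h with
  | refl => exact Relation.ReflTransGen.refl
  | tail _ hadj ih => exact Relation.ReflTransGen.head hadj.symm ih

lemma reach_component (C : DirGraph V) {q v : V} (h : C.Reach q v) :
    (C.component q).Reach q v := by
  induction h with
  | refl => exact Relation.ReflTransGen.refl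
  | @tail b c hb hadj ih =>
      refine ih.tail ?_
      rcases hadj with he | he
      · exact Or.inl (Finset.mem_filter.mpr ⟨he, hb⟩)
      · exact Or.inr (Finset.mem_filter.mpr ⟨he, hb.tail (Or.inr he)⟩)

end DirGraph

open DirGraph in
/-- if `q` belongs to the (k,l)-core `C` of `G` (`k, l > 0`), then the
weakly connected component of `C` containing `q` is itself a weakly connected subgraph
of `G` containing `q` satisfying the degree constraints, and it contains every weakly
connected subgraph of `G` that contains `q` and satisfies the degree constraints; hence
it is the unique maximum such subgraph (correctness of answering a CSD query). -/
theorem csd_query_correct {V : Type*} (G C : DirGraph V) (k l : ℕ)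
    (hk : 0 < k) (hl : 0 < l) (hC : G.IsKLCore k l C) (q : V) (hq : q ∈ C.verts) :
    (C.component q).IsSubgraph G ∧ q ∈ (C.component q).verts ∧
    (C.component q).WeaklyConnected ∧ (C.component q).DegOK k l ∧
    ∀ H : DirGraph V, H.IsSubgraph G → q ∈ H.verts → H.WeaklyConnected →
      H.DegOK k l → H.IsSubgraph (C.component q) := by
  obtain ⟨hsub, hdeg, hmax⟩ := hC
  have hvq : q ∈ (C.component q).verts :=
    Finset.mem_filter.mpr ⟨hq, Relation.ReflTransGen.refl⟩
  refine ⟨⟨?_, ?_⟩, hvq, ?_, ?_, ?_⟩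
  · exact fun v hv => hsub.1 (Finset.mem_filter.mp hv).1
  · exact fun e he => hsub.2 (Finset.mem_filter.mp he).1
  · intro u hu v hv
    have hru := (Finset.mem_filter.mp hu).2
    have hrv := (Finset.mem_filter.mp hv).2
    exact (reach_symm _ (reach_component C hru)).trans (reach_component C hrv)
  · intro v hv
    obtain ⟨hvC, hrv⟩ := Finset.mem_filter.mp hv
    obtain ⟨hin, hout⟩ := hdeg v hvC
    constructor
    · refine hin.trans (Finset.card_le_card ?_)
      intro e he
      obtain ⟨heC, he2⟩ := Finset.mem_filter.mp he
      refine Finset.mem_filter.mpr ⟨Finset.mem_filter.mpr ⟨heC, ?_⟩, he2⟩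
      subst he2
      exact hrv.tail (Or.inr heC)
    · refine hout.trans (Finset.card_le_card ?_)
      intro e he
      obtain ⟨heC, he1⟩ := Finset.mem_filter.mp he
      exact Finset.mem_filter.mpr ⟨Finset.mem_filter.mpr ⟨heC, he1 ▸ hrv⟩, he1⟩
  · intro H hHG hqH hHconn hHdeg
    have hHC : H.IsSubgraph C := hmax H hHG hHdeg
    have hreach : ∀ v ∈ H.verts, C.Reach q v := fun v hv =>
      reach_mono hHC.2 (hHconn q hqH v hv)
    constructor
    · intro v hv
      exact Finset.mem_filter.mpr ⟨hHC.1 hv, hreach v hv⟩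
    · intro e he
      exact Finset.mem_filter.mpr ⟨hHC.2 he, hreach e.1 (H.edge_fst e he)⟩
end
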